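/- Let Ω ⊆ ℝⁿ be a connected open set and let W ⊆ Ω be open and nonempty with W ≠ Ω. Then there exist y ∈ W and ρ > 0 such that the open ball B(y,ρ) is contained in W, the closed ball B̄(y,ρ) is contained in Ω, and the sphere ∂B(y,ρ) contains a point of the topological boundary of W. -/

import Mathlib

open Metric Filter MeasureTheory Topology
open scoped RealInnerProductSpace

noncomputable section

/-- The operator norm of an `n × n` real matrix, viewed as a linear operator
on Euclidean space. -/
def matOpNorm {n : ℕ} (M : Matrix (Fin n) (Fin n) ℝ) : ℝ :=
  ‖(Matrix.toEuclideanCLM (𝕜 := ℝ) M :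
      EuclideanSpace ℝ (Fin n) →L[ℝ] EuclideanSpace ℝ (Fin n))‖

/-- The Hessian matrix of `f : ℝⁿ → ℝ` at `x`, with entries the second
iterated derivatives in coordinate directions. -/
def hessianMatrix {n : ℕ} (f : EuclideanSpace ℝ (Fin n) → ℝ)
    (x : EuclideanSpace ℝ (Fin n)) : Matrix (Fin n) (Fin n) ℝ :=
  Matrix.of fun i j =>
    iteratedFDeriv ℝ 2 f x ![EuclideanSpace.single i 1, EuclideanSpace.single j 1]

/-- A continuous `u` is a viscosity subsolution of `G(D²u, Du, u) ≥ 0` in `U`. -/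
def IsViscositySubsolution {n : ℕ}
    (G : Matrix (Fin n) (Fin n) ℝ → EuclideanSpace ℝ (Fin n) → ℝ → ℝ)
    (U : Set (EuclideanSpace ℝ (Fin n))) (u : EuclideanSpace ℝ (Fin n) → ℝ) : Prop :=
  ContinuousOn u U ∧
    ∀ x ∈ U, ∀ φ : EuclideanSpace ℝ (Fin n) → ℝ, ContDiffAt ℝ 2 φ x →
      IsLocalMax (fun y => u y - φ y) x →
        0 ≤ G (hessianMatrix φ x) (gradient φ x) (u x)

/-- A continuous `u` is a viscosity supersolution of `G(D²u, Du, u) ≤ 0` in `U`. -/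
def IsViscositySupersolution {n : ℕ}
    (G : Matrix (Fin n) (Fin n) ℝ → EuclideanSpace ℝ (Fin n) → ℝ → ℝ)
    (U : Set (EuclideanSpace ℝ (Fin n))) (u : EuclideanSpace ℝ (Fin n) → ℝ) : Prop :=
  ContinuousOn u U ∧
    ∀ x ∈ U, ∀ φ : EuclideanSpace ℝ (Fin n) → ℝ, ContDiffAt ℝ 2 φ x →
      IsLocalMin (fun y => u y - φ y) x →
        G (hessianMatrix φ x) (gradient φ x) (u x) ≤ 0

/-- A continuous `u` is a viscosity solution of `G(D²u, Du, u) = 0` in `U`. -/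
def IsViscositySolution {n : ℕ}
    (G : Matrix (Fin n) (Fin n) ℝ → EuclideanSpace ℝ (Fin n) → ℝ → ℝ)
    (U : Set (EuclideanSpace ℝ (Fin n))) (u : EuclideanSpace ℝ (Fin n) → ℝ) : Prop :=
  IsViscositySubsolution G U u ∧ IsViscositySupersolution G U u

/-- The structure condition (F1): uniform ellipticity with constants
`0 < lam ≤ Lam` and Lipschitz dependence on the lower order terms. -/
def SatisfiesF1 {n : ℕ}
    (F : Matrix (Fin n) (Fin n) ℝ → EuclideanSpace ℝ (Fin n) → ℝ → ℝ)
    (lam Lam gam eta : ℝ) : Prop :=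
  ∀ M N : Matrix (Fin n) (Fin n) ℝ, M.IsSymm → N.IsSymm → N.PosSemidef →
    ∀ p q : EuclideanSpace ℝ (Fin n), ∀ z w : ℝ,
      lam * matOpNorm N - gam * ‖p - q‖ - eta * |z - w| ≤ F (M + N) p z - F M q w ∧
        F (M + N) p z - F M q w ≤ Lam * matOpNorm N + gam * ‖p - q‖ + eta * |z - w|

/-- The Pucci maximal operator `M⁺`. -/
def pucciPlus {n : ℕ} (lam Lam : ℝ) (M : Matrix (Fin n) (Fin n) ℝ) : ℝ :=
  sSup ((fun A => (A * M).trace) ''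
    {A : Matrix (Fin n) (Fin n) ℝ |
      A.IsSymm ∧ (A - lam • 1).PosSemidef ∧ (Lam • 1 - A).PosSemidef})

/-- The Pucci minimal operator `M⁻`. -/
def pucciMinus {n : ℕ} (lam Lam : ℝ) (M : Matrix (Fin n) (Fin n) ℝ) : ℝ :=
  sInf ((fun A => (A * M).trace) ''
    {A : Matrix (Fin n) (Fin n) ℝ |
      A.IsSymm ∧ (A - lam • 1).PosSemidef ∧ (Lam • 1 - A).PosSemidef})

/-- The extremal operator `G⁺(M,p,z) = M⁺(M) + γ|p| + η|z|`. -/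
def Gplus {n : ℕ} (lam Lam gam eta : ℝ) (M : Matrix (Fin n) (Fin n) ℝ)
    (p : EuclideanSpace ℝ (Fin n)) (z : ℝ) : ℝ :=
  pucciPlus lam Lam M + gam * ‖p‖ + eta * |z|

/-- The extremal operator `G⁻(M,p,z) = M⁻(M) − γ|p| − η|z|`. -/
def Gminus {n : ℕ} (lam Lam gam eta : ℝ) (M : Matrix (Fin n) (Fin n) ℝ)
    (p : EuclideanSpace ℝ (Fin n)) (z : ℝ) : ℝ :=
  pucciMinus lam Lam M - gam * ‖p‖ - eta * |z|

/-- `u` satisfies (SLL): `G⁻(D²u,Du,u) ≤ 0 ≤ G⁺(D²u,Du,u)` in the viscosity sense in `U`. -/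
def SatisfiesSLL {n : ℕ} (lam Lam gam eta : ℝ)
    (U : Set (EuclideanSpace ℝ (Fin n))) (u : EuclideanSpace ℝ (Fin n) → ℝ) : Prop :=
  IsViscositySupersolution (Gminus lam Lam gam eta) U u ∧
    IsViscositySubsolution (Gplus lam Lam gam eta) U u

/-- `u` vanishes of infinite order at `x₀`. -/
def VanishesInfiniteOrder {n : ℕ} (u : EuclideanSpace ℝ (Fin n) → ℝ)
    (x₀ : EuclideanSpace ℝ (Fin n)) : Prop :=
  ∃ ε > (0 : ℝ), ∀ β > (0 : ℝ),
    Tendsto (fun r : ℝ => r ^ (-β) * ∫ x in ball x₀ r, |u x| ^ ε)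
      (𝓝[>] (0 : ℝ)) (𝓝 0)

attribute [local instance] Matrix.frobeniusNormedAddCommGroup Matrix.frobeniusNormedSpace

/-- `F` is `C^{1,1}` in a neighborhood of the origin: differentiable there,
with Lipschitz derivative. -/
def IsC11NearOrigin {n : ℕ}
    (F : Matrix (Fin n) (Fin n) ℝ → EuclideanSpace ℝ (Fin n) → ℝ → ℝ) : Prop :=
  ∃ V : Set (Matrix (Fin n) (Fin n) ℝ × EuclideanSpace ℝ (Fin n) × ℝ),
    V ∈ 𝓝 ((0, 0, 0) : Matrix (Fin n) (Fin n) ℝ × EuclideanSpace ℝ (Fin n) × ℝ) ∧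
    (∀ q ∈ V, DifferentiableAt ℝ (fun q' : Matrix (Fin n) (Fin n) ℝ ×
        EuclideanSpace ℝ (Fin n) × ℝ => F q'.1 q'.2.1 q'.2.2) q) ∧
    ∃ K : NNReal, @LipschitzOnWith _ _ _
      ContinuousLinearMap.toNormedAddCommGroup.toPseudoMetricSpace.toPseudoEMetricSpace K
      (fderiv ℝ (fun q' : Matrix (Fin n) (Fin n) ℝ ×
        EuclideanSpace ℝ (Fin n) × ℝ => F q'.1 q'.2.1 q'.2.2)) V

/-- In a connected open set `Ω`, any nonempty open `W ⊊ Ω` contains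
a ball whose closure lies in `Ω` and whose boundary sphere touches `∂W`. -/
theorem exists_interior_tangent_ball (n : ℕ)
    (Ω W : Set (EuclideanSpace ℝ (Fin n)))
    (hΩ : IsOpen Ω) (hΩconn : IsConnected Ω)
    (hW : IsOpen W) (hWne : W.Nonempty) (hWΩ : W ⊆ Ω) (hWneq : W ≠ Ω) :
    ∃ y ∈ W, ∃ ρ > (0 : ℝ),
      ball y ρ ⊆ W ∧ closedBall y ρ ⊆ Ω ∧
      (sphere y ρ ∩ frontier W).Nonempty := by
  -- Step 1: find z ∈ Ω ∩ frontier W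
  have hzex : (Ω ∩ frontier W).Nonempty := by
    by_contra hempty
    rw [Set.not_nonempty_iff_eq_empty] at hempty
    have hsub : Ω ⊆ W ∪ (closure W)ᶜ := by
      intro x hx
      by_cases hxW : x ∈ W
      · exact Or.inl hxW
      · refine Or.inr ?_
        intro hxc
        have : x ∈ frontier W := ⟨hxc, by rwa [hW.interior_eq]⟩
        exact Set.eq_empty_iff_forall_notMem.mp hempty x ⟨hx, this⟩
    have h1 : (Ω ∩ W).Nonempty := hWne.imp fun x hx => ⟨hWΩ hx, hx⟩
    have h2 : ¬ (Ω ∩ (W ∩ (closure W)ᶜ)).Nonempty := by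
      rintro ⟨x, -, hxW, hxc⟩
      exact hxc (subset_closure hxW)
    have h3 : ¬ (Ω ∩ (closure W)ᶜ).Nonempty := by
      intro h3
      exact h2 (by simpa [Set.inter_assoc] using hΩconn.isPreconnected W (closure W)ᶜ hW isClosed_closure.isOpen_compl hsub h1 h3)
    have hΩW : Ω ⊆ W := by
      intro x hx
      rcases hsub hx with h | h
      · exact h
      · exact absurd ⟨x, hx, h⟩ h3
    exact hWneq (le_antisymm hWΩ hΩW)
  obtain ⟨z, hzΩ, hzfr⟩ := hzex
  have hzW : z ∉ W := by
    intro h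
    exact (hzfr.2) (by rwa [hW.interior_eq])
  -- Step 2: ball around z inside Ω
  obtain ⟨r, hr, hball⟩ := Metric.isOpen_iff.mp hΩ z hzΩ
  -- z ∈ closure W, so there is y ∈ W with dist y z < r/2
  have hzcl : z ∈ closure W := hzfr.1
  obtain ⟨y, hyW, hyz⟩ := Metric.mem_closure_iff.mp hzcl (r/2) (by linarith)
  rw [dist_comm] at hyz
  -- ρ := infDist y Wᶜ
  set ρ := Metric.infDist y Wᶜ with hρdef
  have hWcne : (Wᶜ : Set (EuclideanSpace ℝ (Fin n))).Nonempty := ⟨z, hzW⟩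
  have hρpos : 0 < ρ := by
    rw [hρdef, ← hW.isClosed_compl.notMem_iff_infDist_pos hWcne]
    simpa using hyW
  have hρle : ρ ≤ dist y z := Metric.infDist_le_dist_of_mem hzW
  have hρlt : ρ < r / 2 := lt_of_le_of_lt hρle hyz
  have hballW : ball y ρ ⊆ W := by
    intro x hx
    by_contra hxW
    have hxWc : x ∈ (Wᶜ : Set (EuclideanSpace ℝ (Fin n))) := hxW
    have h1 : ρ ≤ dist y x := Metric.infDist_le_dist_of_mem hxWc
    have h2 : dist x y < ρ := Metric.mem_ball.mp hx
    rw [dist_comm] at h2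
    linarith
  have hcbΩ : closedBall y ρ ⊆ Ω := by
    intro x hx
    apply hball
    have : dist x z ≤ dist x y + dist y z := dist_triangle x y z
    have hxy : dist x y ≤ ρ := Metric.mem_closedBall.mp hx
    have : dist x z < r := by linarith
    exact Metric.mem_ball.mpr this
  obtain ⟨w, hwWc, hwdist⟩ := hW.isClosed_compl.exists_infDist_eq_dist hWcne y
  refine ⟨y, hyW, ρ, hρpos, hballW, hcbΩ, w, ?_, ?_, ?_⟩
  · rw [Metric.mem_sphere, dist_comm]
    exact hwdist.symm
  · have hwcb : w ∈ closedBall y ρ := by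
      rw [Metric.mem_closedBall, dist_comm, ← hwdist]
    have : closedBall y ρ = closure (ball y ρ) := (closure_ball y hρpos.ne').symm
    rw [this] at hwcb
    exact closure_mono hballW hwcb
  · rwa [hW.interior_eq]
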